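/- arXiv:1712.05101 — 3 statements merged into one kernel-verified Lean document; each statement's English description precedes it below -/
import Mathlib

section
/- Let S : ℕ → Set α and tagged : α → ℕ → Prop such that tags are monotone (tagged u t implies tagged u (t+1) for all u and t) and tagging precedes removal (whenever u ∈ S t and u ∉ S (t+1), then tagged u t). Let C be a finite set of nodes and T : ℕ a time such that every u ∈ C satisfies u ∈ S τ for some time τ ≤ T, and ¬ tagged u σ for some time σ ≥ T. Then C ⊆ S T, i.e., all nodes of C are simultaneously present at time T. -/
/-- Tag-based validation: if tags are monotone and tagging precedes removal, `C` is
a finite set of nodes, and every `u ∈ C` is present at some time `τ ≤ T` and untagged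
at some time `σ ≥ T`, then all nodes of `C` are simultaneously present at time `T`. -/
theorem collected_subset_of_untagged
    {α : Type*} (S : ℕ → Set α) (tagged : α → ℕ → Prop)
    (hmono : ∀ (u : α) (t : ℕ), tagged u t → tagged u (t + 1))
    (htag : ∀ (u : α) (t : ℕ), u ∈ S t → u ∉ S (t + 1) → tagged u t)
    (C : Finset α) (T : ℕ)
    (hC : ∀ u ∈ C, (∃ τ ≤ T, u ∈ S τ) ∧ (∃ σ, T ≤ σ ∧ ¬ tagged u σ)) :
    ↑C ⊆ S T := by
  intro u hu
  obtain ⟨⟨τ, hτ, hS⟩, ⟨σ, hσ, hnt⟩⟩ := hC u hu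
  have hmono' : ∀ s t, s ≤ t → tagged u s → tagged u t := by
    intro s t hst h
    induction t, hst using Nat.le_induction with
    | base => exact h
    | succ n _ ih => exact hmono u n ih
  have key : ∀ t, τ ≤ t → t ≤ T → u ∈ S t := by
    intro t ht htT
    induction t with
    | zero => exact Nat.le_zero.mp ht ▸ hS
    | succ n ih =>
      rcases Nat.lt_or_ge τ (n+1) with h' | h'
      · have hn : u ∈ S n := ih (Nat.lt_succ_iff.mp h') (Nat.le_of_succ_le htT)
        by_contra hns
        exact hnt (hmono' n σ (by omega) (htag u n hn hns))
      · exact (Nat.le_antisymm ht h' : τ = n+1) ▸ hS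
  exact key T hτ le_rfl
end

section
/- Fix an integer k ≥ 2 and a k-ary search tree T satisfying the search-tree invariant, and let lo ≤ hi be keys. Consider the sequential range query that traverses T from the root and, at each internal node with keys a_1 < … < a_{k−1}, recursively visits exactly the children c_i with l ≤ i ≤ r, where r is the largest index in {1, …, k} such that r = 1 or a_{r−1} ≤ hi, and l is the smallest index in {1, …, k} such that l = k or lo < a_l, and returns all keys x with lo ≤ x ≤ hi stored in the leaves it visits. This procedure returns exactly the set of keys x in the key set of T with lo ≤ x ≤ hi. -/
/-- A `k`-ary search tree over keys `K`: every internal node stores `k − 1` keys and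
has exactly `k` children, and every leaf stores a finite set of keys. -/
inductive KST (k : ℕ) (K : Type*) : Type _ where
  | leaf (keys : Finset K) : KST k K
  | internal (a : Fin (k - 1) → K) (c : Fin k → KST k K) : KST k K

namespace KST

/-- The key set of a tree: the union of the key sets of its leaves. -/
def keySet {k : ℕ} {K : Type*} : KST k K → Set K
  | leaf s => ↑s
  | internal _ c => ⋃ i, (c i).keySet

/-- The search-tree invariant: every leaf stores at most `k − 1` keys, the keys of each
internal node are strictly increasing (`a_1 < … < a_{k−1}`, here 0-indexed), and every
key `x` in the subtree rooted at the `i`-th child satisfies `a_{i−1} ≤ x` and `x < a_i`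
(with `a_0 = −∞` and `a_k = +∞`; in the 0-indexed formulation: `a j ≤ x` for all
`j < i` and `x < a j` for all `j ≥ i`). -/
def Invariant {k : ℕ} {K : Type*} [LinearOrder K] : KST k K → Prop
  | leaf s => s.card ≤ k - 1
  | internal a c => StrictMono a ∧ (∀ i, (c i).Invariant) ∧
      ∀ i : Fin k, ∀ x ∈ (c i).keySet, ∀ j : Fin (k - 1),
        ((j : ℕ) < (i : ℕ) → a j ≤ x) ∧ ((i : ℕ) ≤ (j : ℕ) → x < a j)

/-- The index `i` of the child into which the search for `x` descends: the unique
index with `a_{i−1} ≤ x < a_i` (with `a_0 = −∞`, `a_k = +∞`); concretely, the number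
of keys of the node that are `≤ x`. -/
def childIndex {k : ℕ} {K : Type*} [LinearOrder K] (hk : 2 ≤ k)
    (a : Fin (k - 1) → K) (x : K) : Fin k :=
  ⟨(Finset.univ.filter fun j => a j ≤ x).card, by
    have h := Finset.card_filter_le (Finset.univ : Finset (Fin (k - 1)))
      (fun j => a j ≤ x)
    simp only [Finset.card_univ, Fintype.card_fin] at h
    omega⟩

/-- The leaf at which the search for `x` terminates: starting from the root, repeatedly
descend from each internal node to the child `c_i` for the unique index `i` with
`a_{i−1} ≤ x < a_i`. -/
def searchLeaf {k : ℕ} {K : Type*} [LinearOrder K] (hk : 2 ≤ k) :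
    KST k K → K → KST k K
  | leaf s, _ => leaf s
  | internal a c, x => (c (childIndex hk a x)).searchLeaf hk x

end KST

/-- The sequential range query for `[lo, hi]` visits exactly the children `c_i` with
`l ≤ i ≤ r`, where `r` is the largest index such that `r = 1` or `a_{r−1} ≤ hi`, and
`l` is the smallest index such that `l = k` or `lo < a_l`.  Since `a_1 < … < a_{k−1}`,
the visited children are exactly those indices `i` satisfying `(i = 1 ∨ a_{i−1} ≤ hi)`
and `(i = k ∨ lo < a_i)`; this is the 0-indexed formulation of that condition. -/
def KST.visits {k : ℕ} {K : Type*} [LinearOrder K]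
    (a : Fin (k - 1) → K) (lo hi : K) (i : Fin k) : Prop :=
  ((i : ℕ) = 0 ∨ ∃ j : Fin (k - 1), (j : ℕ) + 1 = (i : ℕ) ∧ a j ≤ hi) ∧
  ((i : ℕ) = k - 1 ∨ ∃ j : Fin (k - 1), (j : ℕ) = (i : ℕ) ∧ lo < a j)

/-- The set of keys returned by the sequential range query for `[lo, hi]`: it traverses
the tree from the root, at each internal node recursively visits exactly the children
selected by `KST.visits`, and returns all keys `x` with `lo ≤ x ≤ hi` stored in the
leaves it visits. -/
def KST.rangeQueryKeys {k : ℕ} {K : Type*} [LinearOrder K] (lo hi : K) :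
    KST k K → Set K
  | .leaf s => {x | x ∈ s ∧ lo ≤ x ∧ x ≤ hi}
  | .internal a c =>
      ⋃ (i : Fin k) (_ : KST.visits a lo hi i), KST.rangeQueryKeys lo hi (c i)

/-- The sequential range query on a `k`-ary search tree (`k ≥ 2`) satisfying the
search-tree invariant returns exactly the set of keys `x` in the key set of `T`
with `lo ≤ x ≤ hi`. -/
theorem KST.rangeQueryKeys_eq
    {K : Type*} [LinearOrder K] {k : ℕ} (hk : 2 ≤ k)
    (T : KST k K) (hT : T.Invariant) (lo hi : K) (hlohi : lo ≤ hi) :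
    KST.rangeQueryKeys lo hi T = {x ∈ T.keySet | lo ≤ x ∧ x ≤ hi} := by
  induction T with
  | leaf s =>
      ext x
      simp [KST.rangeQueryKeys, KST.keySet]
  | internal a c ih =>
      obtain ⟨hmono, hinv, hsep⟩ := hT
      ext x
      simp only [KST.rangeQueryKeys, KST.keySet, Set.mem_iUnion, Set.mem_setOf_eq]
      constructor
      · rintro ⟨i, hv, hx⟩
        rw [ih i (hinv i)] at hx
        exact ⟨⟨i, hx.1⟩, hx.2⟩
      · rintro ⟨⟨i, hx⟩, hlo, hhi⟩
        refine ⟨i, ⟨?_, ?_⟩, ?_⟩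
        · rcases Nat.eq_zero_or_pos (i : ℕ) with h0 | h0
          · exact Or.inl h0
          · have hik : (i : ℕ) < k := i.isLt
            refine Or.inr ⟨⟨(i : ℕ) - 1, by omega⟩, by simp; omega, ?_⟩
            have := (hsep i x hx ⟨(i : ℕ) - 1, by omega⟩).1 (by simp; omega)
            exact this.trans hhi
        · have hik : (i : ℕ) < k := i.isLt
          rcases eq_or_ne (i : ℕ) (k - 1) with h0 | h0
          · exact Or.inl h0
          · refine Or.inr ⟨⟨(i : ℕ), by omega⟩, rfl, ?_⟩
            have := (hsep i x hx ⟨(i : ℕ), by omega⟩).2 (by simp)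
            exact lt_of_le_of_lt hlo this
        · rw [ih i (hinv i)]
          exact ⟨hx, hlo, hhi⟩
end

section
/- Fix an integer k ≥ 2 and a k-ary search tree T satisfying the search-tree invariant, let p be an internal node of T, and let c_j be a child of p. Suppose every child of p other than c_j is a leaf, that exactly one of these other children is nonempty, and that this nonempty leaf stores a single key x. Then the tree obtained from T by replacing the subtree rooted at p with the subtree rooted at c_j is again a k-ary search tree satisfying the search-tree invariant, and its key set is keySet(T) \ {x}. -/
/-- `KST.Replaced T p q T'` holds when `T'` is obtained from `T` by replacing (one
occurrence of) the subtree `p`, rooted at some node of `T`, by the tree `q`. -/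
inductive KST.Replaced {k : ℕ} {K : Type*} :
    KST k K → KST k K → KST k K → KST k K → Prop
  | here (p q : KST k K) : KST.Replaced p p q q
  | child {a : Fin (k - 1) → K} {c : Fin k → KST k K} {p q t' : KST k K} (i : Fin k) :
      KST.Replaced (c i) p q t' →
      KST.Replaced (KST.internal a c) p q (KST.internal a (Function.update c i t'))

lemma KST.keySet_disjoint_lt {k : ℕ} {K : Type*} [LinearOrder K]
    {a : Fin (k - 1) → K} {c : Fin k → KST k K}
    (hinv : (KST.internal a c).Invariant) {i i' : Fin k} (h : (i : ℕ) < (i' : ℕ))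
    {x : K} (hx : x ∈ (c i).keySet) (hx' : x ∈ (c i').keySet) : False := by
  obtain ⟨_, _, hb⟩ := hinv
  have hm : (i : ℕ) < k - 1 := by have := i'.2; omega
  have h1 := (hb i x hx ⟨i, hm⟩).2 (le_refl _)
  have h2 := (hb i' x hx' ⟨i, hm⟩).1 h
  exact absurd h1 (not_lt.2 h2)

lemma KST.keySet_disjoint {k : ℕ} {K : Type*} [LinearOrder K]
    {a : Fin (k - 1) → K} {c : Fin k → KST k K}
    (hinv : (KST.internal a c).Invariant) {i i' : Fin k} (h : i ≠ i')
    {x : K} (hx : x ∈ (c i).keySet) (hx' : x ∈ (c i').keySet) : False := by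
  rcases lt_or_gt_of_ne (fun he => h (Fin.ext he) : (i : ℕ) ≠ (i' : ℕ)) with hlt | hgt
  · exact KST.keySet_disjoint_lt hinv hlt hx hx'
  · exact KST.keySet_disjoint_lt hinv hgt hx' hx

lemma KST.Replaced.keySet_subset {k : ℕ} {K : Type*} {t p q t' : KST k K}
    (h : KST.Replaced t p q t') : p.keySet ⊆ t.keySet := by
  induction h with
  | here p q => exact subset_rfl
  | child i _ ih => exact fun y hy => Set.mem_iUnion.2 ⟨i, ih hy⟩

lemma KST.replaced_correct {k : ℕ} {K : Type*} [LinearOrder K] {x : K}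
    {p q t t' : KST k K} (h : KST.Replaced t p q t')
    (hxp : x ∈ p.keySet)
    (hpq : p.Invariant → q.Invariant ∧ q.keySet = p.keySet \ {x}) :
    t.Invariant → t'.Invariant ∧ t'.keySet = t.keySet \ {x} := by
  induction h with
  | here p q => exact fun ht => hpq ht
  | @child a' c' p' q' t'0 i₀ hrep' ih =>
    rintro ⟨hmono, hinvs, hb⟩
    obtain ⟨ht'inv, ht'keys⟩ := ih hxp hpq (hinvs i₀)
    have hsub : t'0.keySet ⊆ (c' i₀).keySet := by
      rw [ht'keys]; exact Set.diff_subset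
    have hxin : x ∈ (c' i₀).keySet := hrep'.keySet_subset hxp
    constructor
    · refine ⟨hmono, ?_, ?_⟩
      · intro i'
        by_cases h : i' = i₀
        · subst h; simpa using ht'inv
        · rw [Function.update_of_ne h]; exact hinvs i'
      · intro i' y hy jj
        by_cases h : i' = i₀
        · subst h
          rw [Function.update_self] at hy
          exact hb i' y (hsub hy) jj
        · rw [Function.update_of_ne h] at hy
          exact hb i' y hy jj
    · ext y
      simp only [KST.keySet, Set.mem_iUnion, Set.mem_diff, Set.mem_singleton_iff]
      constructor
      · rintro ⟨i', hy⟩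
        by_cases h : i' = i₀
        · subst h
          rw [Function.update_self, ht'keys] at hy
          exact ⟨⟨i', hy.1⟩, hy.2⟩
        · rw [Function.update_of_ne h] at hy
          refine ⟨⟨i', hy⟩, ?_⟩
          rintro rfl
          exact KST.keySet_disjoint ⟨hmono, hinvs, hb⟩ h hy hxin
      · rintro ⟨⟨i', hy⟩, hne⟩
        by_cases h : i' = i₀
        · subst h
          exact ⟨i', by rw [Function.update_self, ht'keys]; exact ⟨hy, hne⟩⟩
        · exact ⟨i', by rw [Function.update_of_ne h]; exact hy⟩

/-- Pruning deletion: let `T` be a `k`-ary search tree (`k ≥ 2`) satisfying the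
search-tree invariant, let `p = internal a c` be an internal node of `T`, and let
`c j` be a child of `p`.  Suppose every child of `p` other than `c j` is a leaf,
exactly one of these other children is nonempty, and this nonempty leaf stores the
single key `x`.  Then the tree `T'` obtained from `T` by replacing the subtree rooted
at `p` with the subtree rooted at `c j` is again a `k`-ary search tree satisfying the
search-tree invariant, and its key set is `keySet T \ {x}`. -/
theorem KST.pruning_deletion_correct
    {K : Type*} [LinearOrder K] {k : ℕ} (hk : 2 ≤ k)
    (T T' : KST k K) (hT : T.Invariant)
    (a : Fin (k - 1) → K) (c : Fin k → KST k K) (j : Fin k) (x : K)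
    (hchildren : ∃ i : Fin k, i ≠ j ∧ c i = KST.leaf {x} ∧
      ∀ i' : Fin k, i' ≠ j → i' ≠ i → c i' = KST.leaf (∅ : Finset K))
    (hrep : KST.Replaced T (KST.internal a c) (c j) T') :
    T'.Invariant ∧ T'.keySet = T.keySet \ {x} := by
  obtain ⟨i, hij, hci, hothers⟩ := hchildren
  have hxp : x ∈ (KST.internal a c).keySet := by
    refine Set.mem_iUnion.2 ⟨i, ?_⟩
    rw [hci]; simp [KST.keySet]
  refine KST.replaced_correct hrep hxp ?_ hT
  intro hinv
  have hxnotj : x ∉ (c j).keySet := fun hxj =>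
    KST.keySet_disjoint hinv hij (by rw [hci]; simp [KST.keySet]) hxj
  refine ⟨hinv.2.1 j, ?_⟩
  have hkey : (KST.internal a c).keySet = (c j).keySet ∪ {x} := by
    ext y
    simp only [KST.keySet, Set.mem_iUnion, Set.mem_union, Set.mem_singleton_iff]
    constructor
    · rintro ⟨i', hy⟩
      by_cases h1 : i' = j
      · exact Or.inl (h1 ▸ hy)
      by_cases h2 : i' = i
      · subst h2; rw [hci] at hy; simp [KST.keySet] at hy; exact Or.inr hy
      · rw [hothers i' h1 h2] at hy; simp [KST.keySet] at hy
    · rintro (hy | rfl)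
      · exact ⟨j, hy⟩
      · exact ⟨i, by rw [hci]; simp [KST.keySet]⟩
  rw [hkey]
  ext y
  simp only [Set.mem_diff, Set.mem_union, Set.mem_singleton_iff]
  constructor
  · intro hy
    exact ⟨Or.inl hy, fun he => hxnotj (he ▸ hy)⟩
  · rintro ⟨hy | rfl, hne⟩
    · exact hy
    · exact absurd rfl hne
end
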